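/- arXiv:1705.10604 — 2 statements merged into one kernel-verified Lean document; each statement's English description precedes it below -/
import Mathlib

section
/- Let (X, Y) be a bounded t-structure on a triangulated category D whose heart H has extension closure generated by finitely many objects X_1, ..., X_t (i.e. H is the extension closure of {X_1,...,X_t}), and let (X', Y') be any bounded t-structure on D. Then there exist integers m ≥ n such that X[m] ⊆ X' ⊆ X[n]. -/
open CategoryTheory Category Limits Pretriangulated

namespace Paper

variable {C : Type*} [Category C] [HasZeroObject C] [Preadditive C] [HasShift C ℤ]
  [∀ n : ℤ, (shiftFunctor C n).Additive] [Pretriangulated C]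

/-- The shift of a class of objects: `S⟦n⟧` (closed under isomorphism). -/
def shiftSet (S : Set C) (n : ℤ) : Set C := {X | ∃ A ∈ S, Nonempty (X ≅ A⟦n⟧)}

/-- `S[≤ n] = { S⟦i⟧ ∣ S ∈ S, i ≤ n }`. -/
def shiftsLe (S : Set C) (n : ℤ) : Set C := {X | ∃ A ∈ S, ∃ i : ℤ, i ≤ n ∧ Nonempty (X ≅ A⟦i⟧)}

/-- `S[≥ n] = { S⟦i⟧ ∣ S ∈ S, i ≥ n }`. -/
def shiftsGe (S : Set C) (n : ℤ) : Set C := {X | ∃ A ∈ S, ∃ i : ℤ, n ≤ i ∧ Nonempty (X ≅ A⟦i⟧)}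

/-- `X * Y`: objects `D` fitting in a distinguished triangle `X → D → Y → X⟦1⟧`. -/
def star (X Y : Set C) : Set C :=
  {D | ∃ (A B : C) (f : A ⟶ D) (g : D ⟶ B) (h : B ⟶ A⟦(1 : ℤ)⟧),
    A ∈ X ∧ B ∈ Y ∧ Triangle.mk f g h ∈ distTriang C}

/-- Right perpendicular class. -/
def rightPerp (S : Set C) : Set C := {D | ∀ A ∈ S, ∀ f : A ⟶ D, f = 0}

/-- Left perpendicular class. -/
def leftPerp (S : Set C) : Set C := {D | ∀ B ∈ S, ∀ f : D ⟶ B, f = 0}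

/-- A t-structure `(X, Y)` on a (pre)triangulated category. -/
structure IsTStructure (X Y : Set C) : Prop where
  rp : rightPerp X = Y
  lp : leftPerp Y = X
  dec : ∀ D : C, D ∈ star X Y
  shift : shiftSet X 1 ⊆ X

/-- The heart `H = X ∩ Y⟦1⟧` of a t-structure. -/
def heart (X Y : Set C) : Set C := X ∩ shiftSet Y 1

/-- The extension closure of a class of objects. -/
inductive ExtClosure (S : Set C) : C → Prop
  | of {A : C} (h : A ∈ S) : ExtClosure S A
  | iso {A B : C} (e : A ≅ B) (h : ExtClosure S A) : ExtClosure S B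
  | ext {A E B : C} (f : A ⟶ E) (g : E ⟶ B) (h : B ⟶ A⟦(1 : ℤ)⟧)
      (hT : Triangle.mk f g h ∈ distTriang C)
      (hA : ExtClosure S A) (hB : ExtClosure S B) : ExtClosure S E

/-- The extension closure, as a set. -/
def extClosure (S : Set C) : Set C := {X | ExtClosure S X}

/-- A torsion pair `(T, F)` in the heart of a t-structure `(X, Y)`; short exact sequences in
the heart correspond to distinguished triangles with three terms in the heart. -/
structure IsHeartTorsionPair (X Y T F : Set C) : Prop where
  subT : T ⊆ heart X Y
  subF : F ⊆ heart X Y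
  rp : heart X Y ∩ rightPerp T = F
  lp : heart X Y ∩ leftPerp F = T
  dec : ∀ H₀ ∈ heart X Y, H₀ ∈ star T F

/-- A bounded t-structure. -/
def IsBounded (X Y : Set C) : Prop :=
  (∀ D : C, ∃ n : ℤ, D ∈ shiftSet X n) ∧ (∀ D : C, ∃ n : ℤ, D ∈ shiftSet Y n)

/-- A simple object of the heart of a t-structure: a nonzero object admitting no proper
subobjects in the heart (expressed via distinguished triangles with entries in the heart). -/
def IsSimpleInHeart (X Y : Set C) (A : C) : Prop :=
  A ∈ heart X Y ∧ ¬ IsZero A ∧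
  ∀ (A' B : C) (f : A' ⟶ A) (g : A ⟶ B) (h : B ⟶ A'⟦(1 : ℤ)⟧),
    Triangle.mk f g h ∈ (distTriang C) → A' ∈ heart X Y → B ∈ heart X Y →
    IsZero A' ∨ IsZero B

/-- An algebraic t-structure: a bounded t-structure whose heart is a length category with
finitely many simple objects, i.e. the heart is the extension closure of finitely many
simple objects. -/
def IsAlgebraic (X Y : Set C) : Prop :=
  IsTStructure X Y ∧ IsBounded X Y ∧
  ∃ (t : ℕ) (G : Fin t → C), (∀ i, IsSimpleInHeart X Y (G i)) ∧
    heart X Y = extClosure (Set.range G)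

/-- Thick closure: the smallest triangulated subcategory closed under direct summands. -/
inductive ThickClosure (S : Set C) : C → Prop
  | of {A : C} (h : A ∈ S) : ThickClosure S A
  | iso {A B : C} (e : A ≅ B) (h : ThickClosure S A) : ThickClosure S B
  | shift {A : C} (n : ℤ) (h : ThickClosure S A) : ThickClosure S (A⟦n⟧)
  | ext {A E B : C} (f : A ⟶ E) (g : E ⟶ B) (h : B ⟶ A⟦(1 : ℤ)⟧)
      (hT : Triangle.mk f g h ∈ distTriang C)
      (hA : ThickClosure S A) (hB : ThickClosure S B) : ThickClosure S E
  | retract {A B : C} (s : A ⟶ B) (r : B ⟶ A) (hsr : s ≫ r = 𝟙 A)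
      (h : ThickClosure S B) : ThickClosure S A

/-- Thick closure, as a set. -/
def thickClosure (S : Set C) : Set C := {X | ThickClosure S X}

/-- `Hom(S, T⟦i⟧) = 0` for all `i > 0`. -/
def vanishHomPos (S T : Set C) : Prop :=
  ∀ A ∈ S, ∀ B ∈ T, ∀ i : ℤ, 0 < i → ∀ f : A ⟶ B⟦i⟧, f = 0

/-- A silting subcategory `S` of the (thick) subcategory `P`. -/
def IsSiltingIn (P S : Set C) : Prop :=
  S ⊆ P ∧ thickClosure S = P ∧ vanishHomPos S S

/-- The aisle `X_S = (S[≤ 0])^⊥` of the t-structure associated to a silting subcategory. -/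
def siltXs (S : Set C) : Set C := rightPerp (shiftsLe S 0)

/-- The coaisle `Y_S = (S[≥ 0])^⊥` of the t-structure associated to a silting subcategory. -/
def siltYs (S : Set C) : Set C := rightPerp (shiftsGe S 0)

/-- A class of objects closed under isomorphisms, finite direct sums and direct summands. -/
def IsAddClosed [HasBinaryBiproducts C] (S : Set C) : Prop :=
  (∀ A B : C, (A ≅ B) → A ∈ S → B ∈ S) ∧
  (∀ A B : C, A ∈ S → B ∈ S → (A ⊞ B) ∈ S) ∧
  (∀ A B : C, (∃ (s : A ⟶ B) (r : B ⟶ A), s ≫ r = 𝟙 A) → B ∈ S → A ∈ S)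

/-- Silting-discreteness (relative to the subcategory `P` of compact objects, e.g.
`K^b(proj Λ)`): for every silting subcategory `S` of `P` there are only finitely many silting
subcategories `T` with `S ≥ T ≥ S⟦1⟧`. -/
def IsSiltingDiscrete [HasBinaryBiproducts C] (P : Set C) : Prop :=
  ∀ S : Set C, IsSiltingIn P S → IsAddClosed S →
    {T : Set C | IsSiltingIn P T ∧ IsAddClosed T ∧
      vanishHomPos S T ∧ vanishHomPos T (shiftSet S 1)}.Finite

/-- A t-structure on a full (pre)triangulated subcategory `B` of the ambient category. -/
structure IsTStructureOn (B X Y : Set C) : Prop where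
  subX : X ⊆ B
  subY : Y ⊆ B
  rp : B ∩ rightPerp X = Y
  lp : B ∩ leftPerp Y = X
  dec : ∀ D ∈ B, D ∈ star X Y
  shift : shiftSet X 1 ⊆ X

end Paper

/-!
Boundedness of `(X', Y')` places each of the finitely many generators of the heart `H` of
`(X, Y)` in `X'⟦a⟧ ∩ Y'⟦b⟧` for a common pair `a, b`, hence all of `H`, as both sides are
closed under extensions. Truncating repeatedly with respect to `(X, Y)`, boundedness shows that
every object of `X` is an iterated extension of objects `H⟦i⟧` with `i ≥ 0`, and every object
of `Y` one of objects `H⟦i⟧` with `i ≤ -1`. So `X ⊆ X'⟦a⟧` and `Y ⊆ Y'⟦b⟧`; the first inclusion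
is `X⟦-a⟧ ⊆ X'`, and taking left orthogonals in the second gives `X' ⊆ X⟦-b⟧`.
-/

namespace Paper

section Shift

variable {C : Type*} [Category C]

def IsIsoClosed (S : Set C) : Prop := ∀ ⦃A B : C⦄, (A ≅ B) → A ∈ S → B ∈ S

variable [HasShift C ℤ]

lemma shift_mem_shiftSet {S : Set C} {D : C} (hD : D ∈ S) (n : ℤ) : D⟦n⟧ ∈ shiftSet S n :=
  ⟨D, hD, ⟨Iso.refl _⟩⟩

lemma shiftSet_mono {S T : Set C} (hST : S ⊆ T) (n : ℤ) : shiftSet S n ⊆ shiftSet T n := by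
  rintro D ⟨A, hA, e⟩
  exact ⟨A, hST hA, e⟩

lemma isIsoClosed_shiftSet (S : Set C) (n : ℤ) : IsIsoClosed (shiftSet S n) := by
  rintro A B e ⟨A₀, hA₀, ⟨e₀⟩⟩
  exact ⟨A₀, hA₀, ⟨e.symm ≪≫ e₀⟩⟩

lemma shiftSet_shiftSet (S : Set C) (a b : ℤ) :
    shiftSet (shiftSet S a) b = shiftSet S (a + b) := by
  ext D
  constructor
  · rintro ⟨A, ⟨A₀, hA₀, ⟨e₀⟩⟩, ⟨e⟩⟩
    exact ⟨A₀, hA₀, ⟨e ≪≫ (shiftFunctor C b).mapIso e₀ ≪≫ ((shiftFunctorAdd C a b).app A₀).symm⟩⟩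
  · rintro ⟨A₀, hA₀, ⟨e⟩⟩
    exact ⟨A₀⟦a⟧, shift_mem_shiftSet hA₀ a, ⟨e ≪≫ (shiftFunctorAdd C a b).app A₀⟩⟩

lemma shift_mem_shiftSet_add {S : Set C} {D : C} {a : ℤ} (hD : D ∈ shiftSet S a) (n : ℤ) :
    D⟦n⟧ ∈ shiftSet S (a + n) :=
  shiftSet_shiftSet S a n ▸ shift_mem_shiftSet hD n

lemma mem_shiftSet_iff {S : Set C} (hS : IsIsoClosed S) {D : C} {n : ℤ} :
    D ∈ shiftSet S n ↔ D⟦-n⟧ ∈ S := by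
  constructor
  · rintro ⟨A, hA, ⟨e⟩⟩
    exact hS ((shiftFunctor C (-n)).mapIso e ≪≫ shiftShiftNeg A n).symm hA
  · intro hD
    exact ⟨D⟦-n⟧, hD, ⟨(shiftNegShift D n).symm⟩⟩

lemma shiftSet_zero {S : Set C} (hS : IsIsoClosed S) : shiftSet S 0 = S := by
  ext D
  constructor
  · rintro ⟨A, hA, ⟨e⟩⟩
    exact hS (e ≪≫ (shiftFunctorZero C ℤ).app A).symm hA
  · intro hD
    exact ⟨D, hD, ⟨((shiftFunctorZero C ℤ).app D).symm⟩⟩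

lemma shiftSet_neg_subset_of_subset_shiftSet {S T : Set C} (hT : IsIsoClosed T) {a : ℤ}
    (hST : S ⊆ shiftSet T a) : shiftSet S (-a) ⊆ T :=
  calc shiftSet S (-a) ⊆ shiftSet (shiftSet T a) (-a) := shiftSet_mono hST _
    _ = T := by rw [shiftSet_shiftSet, add_neg_cancel, shiftSet_zero hT]

lemma shiftSet_subset_shiftsGe_inter_shiftsLe {S : Set C} {m n i : ℤ} (hm : m ≤ i) (hn : i ≤ n) :
    shiftSet S i ⊆ shiftsGe S m ∩ shiftsLe S n := by
  rintro D ⟨A, hA, e⟩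
  exact ⟨⟨A, hA, i, hm, e⟩, ⟨A, hA, i, hn, e⟩⟩

lemma shiftsLe_mono {S : Set C} {m n : ℤ} (h : m ≤ n) : shiftsLe S m ⊆ shiftsLe S n := by
  rintro D ⟨A, hA, i, hi, e⟩
  exact ⟨A, hA, i, hi.trans h, e⟩

end Shift

section Orthogonal

variable {C : Type*} [Category C] [Preadditive C]

lemma rightPerp_anti {S T : Set C} (h : S ⊆ T) : rightPerp T ⊆ rightPerp S :=
  fun _ hD A hA => hD A (h hA)

lemma leftPerp_anti {S T : Set C} (h : S ⊆ T) : leftPerp T ⊆ leftPerp S :=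
  fun _ hD B hB => hD B (h hB)

variable [HasShift C ℤ] [∀ n : ℤ, (shiftFunctor C n).Additive]

lemma shiftSet_rightPerp_subset (S : Set C) (n : ℤ) :
    shiftSet (rightPerp S) n ⊆ rightPerp (shiftSet S n) := by
  rintro D ⟨D₀, hD₀, ⟨e⟩⟩ A ⟨A₀, hA₀, ⟨e'⟩⟩ f
  obtain ⟨g, hg⟩ := (shiftFunctor C n).map_surjective (e'.inv ≫ f ≫ e.hom)
  rw [hD₀ A₀ hA₀ g, Functor.map_zero] at hg
  simpa using hg.symm

lemma leftPerp_shiftSet_subset (S : Set C) (n : ℤ) :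
    leftPerp (shiftSet S n) ⊆ shiftSet (leftPerp S) n := by
  intro D hD
  refine ⟨D⟦-n⟧, fun B hB g => ?_, ⟨(shiftNegShift D n).symm⟩⟩
  have h := hD (B⟦n⟧) (shift_mem_shiftSet hB n) ((shiftNegShift D n).inv ≫ g⟦n⟧')
  rwa [Preadditive.IsIso.comp_left_eq_zero, Functor.map_eq_zero_iff] at h

end Orthogonal

section Triangulated

variable {C : Type*} [Category C] [HasZeroObject C] [Preadditive C] [HasShift C ℤ]
  [∀ n : ℤ, (shiftFunctor C n).Additive] [Pretriangulated C]

structure IsExtClosed (S : Set C) : Prop where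
  isIsoClosed : IsIsoClosed S
  ext : ∀ T ∈ distTriang C, T.obj₁ ∈ S → T.obj₃ ∈ S → T.obj₂ ∈ S

lemma isExtClosed_shiftSet {S : Set C} (hS : IsExtClosed S) (n : ℤ) :
    IsExtClosed (shiftSet S n) where
  isIsoClosed := isIsoClosed_shiftSet S n
  ext T hT h₁ h₃ := by
    rw [mem_shiftSet_iff hS.isIsoClosed] at h₁ h₃ ⊢
    exact hS.ext _ (Triangle.shift_distinguished T hT (-n)) h₁ h₃

lemma isExtClosed_rightPerp (S : Set C) : IsExtClosed (rightPerp S) where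
  isIsoClosed A B e hA s hs f := by simpa using hA s hs (f ≫ e.inv)
  ext T hT h₁ h₃ s hs f := by
    obtain ⟨g, rfl⟩ := Triangle.coyoneda_exact₂ T hT f (h₃ s hs _)
    rw [h₁ s hs g, zero_comp]

lemma isExtClosed_leftPerp (S : Set C) : IsExtClosed (leftPerp S) where
  isIsoClosed A B e hA s hs f := by simpa using hA s hs (e.hom ≫ f)
  ext T hT h₁ h₃ s hs f := by
    obtain ⟨g, rfl⟩ := Triangle.yoneda_exact₂ T hT f (h₁ s hs _)
    rw [h₃ s hs g, comp_zero]

lemma subset_extClosure (S : Set C) : S ⊆ extClosure S := fun _ h => ExtClosure.of h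

lemma isExtClosed_extClosure (S : Set C) : IsExtClosed (extClosure S) where
  isIsoClosed _ _ e h := ExtClosure.iso e h
  ext T hT h₁ h₃ := ExtClosure.ext T.mor₁ T.mor₂ T.mor₃ hT h₁ h₃

lemma extClosure_minimal {S T : Set C} (hST : S ⊆ T) (hT : IsExtClosed T) :
    extClosure S ⊆ T := by
  intro D hD
  induction hD with
  | of h => exact hST h
  | iso e _ ih => exact hT.isIsoClosed e ih
  | ext f g w hTr _ _ ihA ihB => exact hT.ext _ hTr ihA ihB

lemma extClosure_mono {S T : Set C} (h : S ⊆ T) : extClosure S ⊆ extClosure T :=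
  extClosure_minimal (h.trans (subset_extClosure T)) (isExtClosed_extClosure T)

lemma mem_star_of_iso {S T : Set C} {D D' : C} (e : D ≅ D') (hD : D ∈ star S T) :
    D' ∈ star S T := by
  obtain ⟨A, B, f, g, h, hA, hB, hT⟩ := hD
  refine ⟨A, B, f ≫ e.hom, e.inv ≫ g, h, hA, hB, isomorphic_distinguished _ hT _ ?_⟩
  exact Triangle.isoMk _ _ (Iso.refl _) e.symm (Iso.refl _) (by simp [Triangle.mk])
    (by simp [Triangle.mk]) (by simp [Triangle.mk])

lemma shift_mem_star {S T : Set C} {D : C} (hD : D ∈ star S T) (n : ℤ) :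
    D⟦n⟧ ∈ star (shiftSet S n) (shiftSet T n) := by
  obtain ⟨A, B, f, g, h, hA, hB, hT⟩ := hD
  let T' := (shiftFunctor (Triangle C) n).obj (Triangle.mk f g h)
  exact ⟨T'.obj₁, T'.obj₃, T'.mor₁, T'.mor₂, T'.mor₃, shift_mem_shiftSet hA n,
    shift_mem_shiftSet hB n, Triangle.shift_distinguished _ hT n⟩

namespace IsTStructure

variable {X Y : Set C} (h : IsTStructure X Y)
include h

lemma isExtClosed_X : IsExtClosed X := h.lp ▸ isExtClosed_leftPerp Y

lemma isExtClosed_Y : IsExtClosed Y := h.rp ▸ isExtClosed_rightPerp X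

lemma antitone_shiftSet_X : Antitone (shiftSet X) := by
  refine antitone_int_of_succ_le fun n => ?_
  rw [add_comm, ← shiftSet_shiftSet]
  exact shiftSet_mono h.shift n

lemma monotone_shiftSet_Y : Monotone (shiftSet Y) := by
  have hX : X ⊆ shiftSet X (-1) := by
    simpa [shiftSet_zero h.isExtClosed_X.isIsoClosed] using
      h.antitone_shiftSet_X (show (-1 : ℤ) ≤ 0 by norm_num)
  have hY : shiftSet Y (-1) ⊆ Y :=
    calc shiftSet Y (-1) = shiftSet (rightPerp X) (-1) := by rw [h.rp]
      _ ⊆ rightPerp (shiftSet X (-1)) := shiftSet_rightPerp_subset X (-1)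
      _ ⊆ rightPerp X := rightPerp_anti hX
      _ = Y := h.rp
  refine monotone_int_of_le_succ fun n => ?_
  calc shiftSet Y n = shiftSet (shiftSet Y (-1)) (n + 1) := by rw [shiftSet_shiftSet]; ring_nf
    _ ⊆ shiftSet Y (n + 1) := shiftSet_mono hY _

lemma mem_star_shiftSet (n : ℤ) (D : C) : D ∈ star (shiftSet X n) (shiftSet Y n) :=
  mem_star_of_iso (shiftNegShift D n) (shift_mem_star (h.dec (D⟦-n⟧)) n)

lemma shiftSet_inter_subset_shiftSet_heart (a : ℤ) :
    shiftSet X a ∩ shiftSet Y (a + 1) ⊆ shiftSet (heart X Y) a := by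
  rintro D ⟨hX, hY⟩
  rw [add_comm, ← shiftSet_shiftSet, mem_shiftSet_iff (isIsoClosed_shiftSet Y 1)] at hY
  rw [mem_shiftSet_iff h.isExtClosed_X.isIsoClosed] at hX
  exact ⟨D⟦-a⟧, ⟨hX, hY⟩, ⟨(shiftNegShift D a).symm⟩⟩

lemma shiftSet_inter_subset_extClosure {a b : ℤ} (hab : a < b) :
    shiftSet X a ∩ shiftSet Y b ⊆
      extClosure (shiftsGe (heart X Y) a ∩ shiftsLe (heart X Y) (b - 1)) := by
  induction b, Int.add_one_le_iff.mpr hab using Int.leInduction with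
  | base =>
    intro D hD
    have hH := h.shiftSet_inter_subset_shiftSet_heart a hD
    exact subset_extClosure _ (shiftSet_subset_shiftsGe_inter_shiftsLe le_rfl (by omega) hH)
  | succ b hab ih =>
    rintro D ⟨hDX, hDY⟩
    -- Truncating at level `b` splits `D` into `A ∈ X⟦b⟧ ∩ Y⟦b + 1⟧ ⊆ H⟦b⟧` and
    -- `B ∈ X⟦a⟧ ∩ Y⟦b⟧`, which is covered by the induction hypothesis.
    obtain ⟨A, B, f, g, w, hA, hB, hT⟩ := h.mem_star_shiftSet b D
    have hAY : A ∈ shiftSet Y (b + 1) :=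
      (isExtClosed_shiftSet h.isExtClosed_Y _).ext _ (inv_rot_of_distTriang _ hT)
        (h.monotone_shiftSet_Y (by omega) (shift_mem_shiftSet_add hB (-1))) hDY
    have hAH := h.shiftSet_inter_subset_shiftSet_heart b ⟨hA, hAY⟩
    have hBX : B ∈ shiftSet X a :=
      (isExtClosed_shiftSet h.isExtClosed_X _).ext _ (rot_of_distTriang _ hT) hDX
        (h.antitone_shiftSet_X (by omega) (shift_mem_shiftSet_add hA 1))
    refine ExtClosure.ext f g w hT
      (subset_extClosure _ (shiftSet_subset_shiftsGe_inter_shiftsLe (by omega) (by omega) hAH)) ?_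
    exact extClosure_mono (Set.inter_subset_inter_right _ (shiftsLe_mono (by omega)))
      (ih (by omega) ⟨hBX, hB⟩)

lemma subset_extClosure_shiftsGe (hb : IsBounded X Y) :
    X ⊆ extClosure (shiftsGe (heart X Y) 0) := by
  intro D hD
  obtain ⟨n, hn⟩ := hb.2 D
  have hDX : D ∈ shiftSet X 0 := by rwa [shiftSet_zero h.isExtClosed_X.isIsoClosed]
  have hDY : D ∈ shiftSet Y (max n 1) := h.monotone_shiftSet_Y (le_max_left n 1) hn
  exact extClosure_mono Set.inter_subset_left
    (h.shiftSet_inter_subset_extClosure (by omega) ⟨hDX, hDY⟩)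

-- With `heart X Y = X ∩ Y⟦1⟧`, the coaisle is built from the shifts `H⟦i⟧` with `i ≤ -1`.
lemma subset_extClosure_shiftsLe (hb : IsBounded X Y) :
    Y ⊆ extClosure (shiftsLe (heart X Y) (-1)) := by
  intro D hD
  obtain ⟨n, hn⟩ := hb.1 D
  have hDX : D ∈ shiftSet X (min n (-1)) := h.antitone_shiftSet_X (min_le_left n (-1)) hn
  have hDY : D ∈ shiftSet Y 0 := by rwa [shiftSet_zero h.isExtClosed_Y.isIsoClosed]
  simpa using extClosure_mono Set.inter_subset_right
    (h.shiftSet_inter_subset_extClosure (by omega) ⟨hDX, hDY⟩)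

lemma shiftsGe_subset_shiftSet_X {S : Set C} {a n : ℤ} (hS : S ⊆ shiftSet X a) (hn : 0 ≤ n) :
    shiftsGe S n ⊆ shiftSet X a := by
  rintro D ⟨A, hA, i, hi, e⟩
  have hD : D ∈ shiftSet X (a + i) := shiftSet_shiftSet X a i ▸ ⟨A, hS hA, e⟩
  exact h.antitone_shiftSet_X (by omega) hD

lemma shiftsLe_subset_shiftSet_Y {S : Set C} {b n : ℤ} (hS : S ⊆ shiftSet Y b) (hn : n ≤ 0) :
    shiftsLe S n ⊆ shiftSet Y b := by
  rintro D ⟨A, hA, i, hi, e⟩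
  have hD : D ∈ shiftSet Y (b + i) := shiftSet_shiftSet Y b i ▸ ⟨A, hS hA, e⟩
  exact h.monotone_shiftSet_Y (by omega) hD

lemma exists_extClosure_range_subset_shiftSet_X (hb : IsBounded X Y) {ι : Type*} [Finite ι]
    (G : ι → C) : ∃ a, extClosure (Set.range G) ⊆ shiftSet X a := by
  choose a ha using fun i => hb.1 (G i)
  obtain ⟨a₀, ha₀⟩ := Finite.exists_ge a
  refine ⟨a₀, extClosure_minimal ?_ (isExtClosed_shiftSet h.isExtClosed_X a₀)⟩
  rintro _ ⟨i, rfl⟩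
  exact h.antitone_shiftSet_X (ha₀ i) (ha i)

lemma exists_extClosure_range_subset_shiftSet_Y (hb : IsBounded X Y) {ι : Type*} [Finite ι]
    (G : ι → C) : ∃ b, extClosure (Set.range G) ⊆ shiftSet Y b := by
  choose b hb using fun i => hb.2 (G i)
  obtain ⟨b₀, hb₀⟩ := Finite.exists_le b
  refine ⟨b₀, extClosure_minimal ?_ (isExtClosed_shiftSet h.isExtClosed_Y b₀)⟩
  rintro _ ⟨i, rfl⟩
  exact h.monotone_shiftSet_Y (hb₀ i) (hb i)

lemma subset_shiftSet_X_of_heart_subset (hb : IsBounded X Y) {X' Y' : Set C}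
    (h' : IsTStructure X' Y') {a : ℤ} (hH : heart X Y ⊆ shiftSet X' a) : X ⊆ shiftSet X' a :=
  (h.subset_extClosure_shiftsGe hb).trans <| extClosure_minimal
    (h'.shiftsGe_subset_shiftSet_X hH le_rfl) (isExtClosed_shiftSet h'.isExtClosed_X a)

lemma subset_shiftSet_Y_of_heart_subset (hb : IsBounded X Y) {X' Y' : Set C}
    (h' : IsTStructure X' Y') {b : ℤ} (hH : heart X Y ⊆ shiftSet Y' b) : Y ⊆ shiftSet Y' b :=
  (h.subset_extClosure_shiftsLe hb).trans <| extClosure_minimal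
    (h'.shiftsLe_subset_shiftSet_Y hH (by norm_num)) (isExtClosed_shiftSet h'.isExtClosed_Y b)

end IsTStructure

end Triangulated

end Paper

namespace Paper

variable {C : Type*} [Category C] [HasZeroObject C] [Preadditive C] [HasShift C ℤ]
  [∀ n : ℤ, (shiftFunctor C n).Additive] [Pretriangulated C]

/-- If `(X, Y)` is a bounded t-structure whose heart is the extension closure of
finitely many objects, and `(X', Y')` is any bounded t-structure, then there are integers
`m ≥ n` with `X⟦m⟧ ⊆ X' ⊆ X⟦n⟧`. -/
theorem statement3 (X Y X' Y' : Set C)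
    (h : IsTStructure X Y) (hb : IsBounded X Y)
    (h' : IsTStructure X' Y') (hb' : IsBounded X' Y')
    (t : ℕ) (G : Fin t → C) (hgen : heart X Y = extClosure (Set.range G)) :
    ∃ m n : ℤ, n ≤ m ∧ shiftSet X m ⊆ X' ∧ X' ⊆ shiftSet X n := by
  obtain ⟨a, hHa⟩ := h'.exists_extClosure_range_subset_shiftSet_X hb' G
  obtain ⟨b, hHb⟩ := h'.exists_extClosure_range_subset_shiftSet_Y hb' G
  rw [← hgen] at hHa hHb
  have hXa : X ⊆ shiftSet X' a := h.subset_shiftSet_X_of_heart_subset hb h' hHa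
  have hYb : Y ⊆ shiftSet Y' b := h.subset_shiftSet_Y_of_heart_subset hb h' hHb
  refine ⟨-a, min (-a) (-b), min_le_left _ _,
    shiftSet_neg_subset_of_subset_shiftSet h'.isExtClosed_X.isIsoClosed hXa, ?_⟩
  calc X' = leftPerp Y' := h'.lp.symm
    _ ⊆ leftPerp (shiftSet Y (-b)) :=
      leftPerp_anti (shiftSet_neg_subset_of_subset_shiftSet h'.isExtClosed_Y.isIsoClosed hYb)
    _ ⊆ shiftSet (leftPerp Y) (-b) := leftPerp_shiftSet_subset Y (-b)
    _ = shiftSet X (-b) := by rw [h.lp]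
    _ ⊆ shiftSet X (min (-a) (-b)) := h.antitone_shiftSet_X (min_le_right _ _)

end Paper
end

section
/- Let (X_T, Y_T) and (X, Y) be t-structures on a triangulated category D with heart H_T = X_T ∩ Y_T[1], and suppose Y_T ⊆ Y (equivalently X ⊆ X_T). Set F = H_T ∩ Y. Then F is closed under extensions, direct summands, and subobjects in the abelian category H_T. -/
open CategoryTheory Category Limits Pretriangulated

namespace Paper

variable {C : Type*} [Category C] [HasZeroObject C] [Preadditive C] [HasShift C ℤ]
  [∀ n : ℤ, (shiftFunctor C n).Additive] [Pretriangulated C]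

section RightPerp

variable {S : Set C}

section

omit [HasZeroObject C] [HasShift C ℤ] [∀ n : ℤ, (shiftFunctor C n).Additive]
  [Pretriangulated C]

lemma mem_rightPerp_of_iso {A B : C} (e : A ≅ B) (hA : A ∈ rightPerp S) : B ∈ rightPerp S :=
  fun W hW φ => by
    rw [← cancel_mono e.inv, zero_comp]
    exact hA W hW (φ ≫ e.inv)

lemma mem_rightPerp_of_retract {A E : C} {s : A ⟶ E} {r : E ⟶ A} (hsr : s ≫ r = 𝟙 A)
    (hE : E ∈ rightPerp S) : A ∈ rightPerp S :=
  fun W hW φ =>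
    calc φ = (φ ≫ s) ≫ r := by rw [assoc, hsr, comp_id]
    _ = 0 := by rw [hE W hW (φ ≫ s), zero_comp]

end

lemma mem_rightPerp_of_distTriang {T : Triangle C} (hT : T ∈ distTriang C)
    (h₁ : T.obj₁ ∈ rightPerp S) (h₃ : T.obj₃ ∈ rightPerp S) : T.obj₂ ∈ rightPerp S :=
  fun W hW φ => by
    obtain ⟨ψ, rfl⟩ := Triangle.coyoneda_exact₂ T hT φ (h₃ W hW (φ ≫ T.mor₂))
    rw [h₁ W hW ψ, zero_comp]

end RightPerp

omit [HasZeroObject C] [Preadditive C] [∀ n : ℤ, (shiftFunctor C n).Additive]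
  [Pretriangulated C] in
lemma exists_shift_neg_one_iso_of_mem_shiftSet_one {S : Set C} {B : C}
    (hB : B ∈ shiftSet S 1) : ∃ B' ∈ S, Nonempty (B⟦(-1 : ℤ)⟧ ≅ B') := by
  obtain ⟨B', hB', ⟨e⟩⟩ := hB
  exact ⟨B', hB', ⟨(shiftFunctor C (-1 : ℤ)).mapIso e ≪≫
    (shiftFunctorCompIsoId C (1 : ℤ) (-1) (by norm_num)).app B'⟩⟩

theorem statement4_general (XT YT X Y : Set C)
    (h : IsTStructure X Y) (hYY : YT ⊆ Y) :
    (∀ (A E B : C) (f : A ⟶ E) (g : E ⟶ B) (w : B ⟶ A⟦(1 : ℤ)⟧),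
        Triangle.mk f g w ∈ (distTriang C) →
        A ∈ heart XT YT ∩ Y → B ∈ heart XT YT ∩ Y → E ∈ heart XT YT →
        E ∈ heart XT YT ∩ Y) ∧
    (∀ A E : C, E ∈ heart XT YT ∩ Y → A ∈ heart XT YT →
        (∃ (s : A ⟶ E) (r : E ⟶ A), s ≫ r = 𝟙 A) → A ∈ heart XT YT ∩ Y) ∧
    (∀ (A E B : C) (f : A ⟶ E) (g : E ⟶ B) (w : B ⟶ A⟦(1 : ℤ)⟧),
        Triangle.mk f g w ∈ (distTriang C) →
        A ∈ heart XT YT → B ∈ heart XT YT → E ∈ heart XT YT ∩ Y →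
        A ∈ heart XT YT ∩ Y) := by
  obtain rfl := h.rp
  refine ⟨?_, ?_, ?_⟩
  · rintro A E B f g w hT ⟨-, hA⟩ ⟨-, hB⟩ hE
    exact ⟨hE, mem_rightPerp_of_distTriang hT hA hB⟩
  · rintro A E ⟨-, hE⟩ hA ⟨s, r, hsr⟩
    exact ⟨hA, mem_rightPerp_of_retract hsr hE⟩
  · rintro A E B f g w hT hA ⟨-, hB⟩ ⟨-, hE⟩
    -- `B⟦-1⟧ → A → E` is distinguished and `B⟦-1⟧ ∈ Y_T ⊆ Y`, so `A` is an extension in `Y`.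
    obtain ⟨B', hB', ⟨e⟩⟩ := exists_shift_neg_one_iso_of_mem_shiftSet_one hB
    exact ⟨hA, mem_rightPerp_of_distTriang (inv_rot_of_distTriang _ hT)
      (mem_rightPerp_of_iso e.symm (hYY hB')) hE⟩

/-- Given t-structures `(X_T, Y_T)` and `(X, Y)` with `Y_T ⊆ Y`, the class
`F = H_T ∩ Y` is closed under extensions, direct summands and subobjects in the heart `H_T`
(short exact sequences in `H_T` being expressed by distinguished triangles). -/
theorem statement4 (XT YT X Y : Set C)
    (hT : IsTStructure XT YT) (h : IsTStructure X Y) (hYY : YT ⊆ Y) :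
    (∀ (A E B : C) (f : A ⟶ E) (g : E ⟶ B) (w : B ⟶ A⟦(1 : ℤ)⟧),
        Triangle.mk f g w ∈ (distTriang C) →
        A ∈ heart XT YT ∩ Y → B ∈ heart XT YT ∩ Y → E ∈ heart XT YT →
        E ∈ heart XT YT ∩ Y) ∧
    (∀ A E : C, E ∈ heart XT YT ∩ Y → A ∈ heart XT YT →
        (∃ (s : A ⟶ E) (r : E ⟶ A), s ≫ r = 𝟙 A) → A ∈ heart XT YT ∩ Y) ∧
    (∀ (A E B : C) (f : A ⟶ E) (g : E ⟶ B) (w : B ⟶ A⟦(1 : ℤ)⟧),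
        Triangle.mk f g w ∈ (distTriang C) →
        A ∈ heart XT YT → B ∈ heart XT YT → E ∈ heart XT YT ∩ Y →
        A ∈ heart XT YT ∩ Y) :=
  statement4_general XT YT X Y h hYY

end Paper
end
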